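/- arXiv:2107.09988 — 7 statements merged into one kernel-verified Lean document; each statement's English description precedes it below -/
import Mathlib

section
/- Abstract form of Theorem 1.1 (global error bound from local approximation errors): under the stated assumptions, ‖∑_{i=1}^M g_i‖_{L²(μ;E)} ≤ √(κ κ*) · (max_{i=1,…,M} ε_i) · ‖G‖_{L²(μ)}. -/
/-!
At a.e. point `x` at most `κ` of the `g i x` are nonzero, so Cauchy–Schwarz gives
`‖∑ i, g i x‖² ≤ κ ∑ i, ‖g i x‖²`. Integrating, inserting the local bounds
`‖g i‖² ≤ (max ε)² ∫_{ω* i} G²`, and using that the `ω* i` overlap at most `κ*` times,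
`∑ i, ∫_{ω* i} G² ≤ κ* ∫ G²`, yields the squared estimate.
-/

open MeasureTheory Finset

section Pointwise

variable {ι E : Type*} [NormedAddCommGroup E]

lemma norm_sum_sq_le_card_mul_sum_norm_sq (s : Finset ι) (v : ι → E) :
    ‖∑ i ∈ s, v i‖ ^ 2 ≤ #s * ∑ i ∈ s, ‖v i‖ ^ 2 :=
  (pow_le_pow_left₀ (norm_nonneg _) (norm_sum_le s v) 2).trans sq_sum_le_card_mul_sum_sq

lemma norm_sum_sq_le_sum_indicator_mul_sum_norm_sq [Fintype ι] {Ω : Type*} (ω : ι → Set Ω)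
    {v : ι → E} {x : Ω} (hv : ∀ i, x ∉ ω i → v i = 0) :
    ‖∑ i, v i‖ ^ 2 ≤ (∑ i, (ω i).indicator (fun _ => (1 : ℝ)) x) * ∑ i, ‖v i‖ ^ 2 := by
  classical
  set t := univ.filter fun i => x ∈ ω i
  have hcard : (#t : ℝ) = ∑ i, (ω i).indicator (fun _ => (1 : ℝ)) x := by
    simp only [t, card_filter, Set.indicator_apply, Nat.cast_sum, Nat.cast_ite, Nat.cast_one,
      Nat.cast_zero]
  have hsum : ∑ i ∈ t, v i = ∑ i, v i :=
    sum_filter_of_ne fun i _ hi => by_contra fun hx => hi (hv i hx)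
  calc ‖∑ i, v i‖ ^ 2 ≤ #t * ∑ i ∈ t, ‖v i‖ ^ 2 :=
        hsum ▸ norm_sum_sq_le_card_mul_sum_norm_sq (E := E) t v
    _ ≤ #t * ∑ i, ‖v i‖ ^ 2 := by gcongr; exact subset_univ t
    _ = _ := by rw [hcard]

end Pointwise

section Integrated

variable {Ω ι : Type*} [MeasurableSpace Ω] {μ : Measure Ω} [Fintype ι]

theorem integral_norm_sum_sq_le_mul_sum {E : Type*} [NormedAddCommGroup E]
    {g : ι → Ω → E} {ω : ι → Set Ω} {κ : ℝ} (hg : ∀ i, MemLp (g i) 2 μ)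
    (hsupp : ∀ i, ∀ᵐ x ∂μ, x ∉ ω i → g i x = 0)
    (hκ : ∀ᵐ x ∂μ, ∑ i, (ω i).indicator (fun _ => (1 : ℝ)) x ≤ κ) :
    ∫ x, ‖∑ i, g i x‖ ^ 2 ∂μ ≤ κ * ∑ i, ∫ x, ‖g i x‖ ^ 2 ∂μ := by
  have hint : ∀ i, Integrable (fun x => ‖g i x‖ ^ 2) μ := fun i =>
    (hg i).integrable_norm_pow two_ne_zero
  have hsum : MemLp (fun x => ∑ i, g i x) 2 μ := memLp_finsetSum univ fun i _ => hg i
  rw [← integral_finsetSum _ fun i _ => hint i, ← integral_const_mul]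
  refine integral_mono_ae (hsum.integrable_norm_pow two_ne_zero)
    ((integrable_finsetSum _ fun i _ => hint i).const_mul κ) ?_
  filter_upwards [ae_all_iff.2 hsupp, hκ] with x hx hxκ
  exact (norm_sum_sq_le_sum_indicator_mul_sum_norm_sq ω hx).trans
    (mul_le_mul_of_nonneg_right hxκ (sum_nonneg fun i _ => sq_nonneg _))

theorem sum_setIntegral_le_mul_integral {f : Ω → ℝ} {s : ι → Set Ω} {κ : ℝ}
    (hf : Integrable f μ) (hf0 : 0 ≤ᵐ[μ] f) (hs : ∀ i, MeasurableSet (s i))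
    (hκ : ∀ᵐ x ∂μ, ∑ i, (s i).indicator (fun _ => (1 : ℝ)) x ≤ κ) :
    ∑ i, ∫ x in s i, f x ∂μ ≤ κ * ∫ x, f x ∂μ := by
  have hind : ∀ i, Integrable ((s i).indicator f) μ := fun i => hf.indicator (hs i)
  simp_rw [← integral_indicator (hs _)]
  rw [← integral_finsetSum _ fun i _ => hind i, ← integral_const_mul]
  refine integral_mono_ae (integrable_finsetSum _ fun i _ => hind i) (hf.const_mul κ) ?_
  filter_upwards [hf0, hκ] with x hx0 hxκ
  have hfactor : ∑ i, (s i).indicator f x =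
      (∑ i, (s i).indicator (fun _ => (1 : ℝ)) x) * f x := by
    rw [sum_mul]
    exact sum_congr rfl fun i _ => by simpa using Set.indicator_mul_left (s i) (fun _ => 1) f
  rw [hfactor]
  exact mul_le_mul_of_nonneg_right hxκ hx0

end Integrated

lemma le_sq_mul_of_sqrt_le_mul_sqrt {a b c : ℝ} (hc : 0 ≤ c) (hb : 0 ≤ b)
    (h : √a ≤ c * √b) : a ≤ c ^ 2 * b := by
  rwa [← Real.sqrt_sq hc, ← Real.sqrt_mul (sq_nonneg c),
    Real.sqrt_le_sqrt_iff (mul_nonneg (sq_nonneg c) hb)] at h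

theorem global_error_from_local_errors_general
    {Ω : Type*} [MeasurableSpace Ω] (μ : Measure Ω)
    {E : Type*} [NormedAddCommGroup E]
    (M : ℕ) (hM : 0 < M) (g : Fin M → Ω → E) (ω ωs : Fin M → Set Ω) (κ κs : ℕ)
    (G : Ω → ℝ) (ε : Fin M → ℝ)
    (hg : ∀ i, MemLp (g i) 2 μ)
    (hG : MemLp G 2 μ)
    (hωs : ∀ i, MeasurableSet (ωs i))
    (hsupp : ∀ i, ∀ᵐ x ∂μ, x ∉ ω i → g i x = 0)
    (hκ : ∀ᵐ x ∂μ, ∑ i, (ω i).indicator (fun _ => (1 : ℝ)) x ≤ (κ : ℝ))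
    (hκs : ∀ᵐ x ∂μ, ∑ i, (ωs i).indicator (fun _ => (1 : ℝ)) x ≤ (κs : ℝ))
    (hε : ∀ i, 0 ≤ ε i)
    (hloc : ∀ i, Real.sqrt (∫ x, ‖g i x‖ ^ 2 ∂μ) ≤
      ε i * Real.sqrt (∫ x in ωs i, (G x) ^ 2 ∂μ)) :
    Real.sqrt (∫ x, ‖∑ i, g i x‖ ^ 2 ∂μ) ≤
      Real.sqrt ((κ : ℝ) * (κs : ℝ)) *
        (Finset.univ.sup' ⟨⟨0, hM⟩, Finset.mem_univ _⟩ ε) *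
        Real.sqrt (∫ x, (G x) ^ 2 ∂μ) := by
  set m := Finset.univ.sup' ⟨⟨0, hM⟩, Finset.mem_univ _⟩ ε
  have hm : ∀ i, ε i ≤ m := fun i => le_sup' ε (mem_univ i)
  have hm0 : 0 ≤ m := (hε _).trans (hm ⟨0, hM⟩)
  have hloc_sq : ∀ i, ∫ x, ‖g i x‖ ^ 2 ∂μ ≤ m ^ 2 * ∫ x in ωs i, (G x) ^ 2 ∂μ := fun i =>
    le_sq_mul_of_sqrt_le_mul_sqrt hm0 (integral_nonneg fun _ => sq_nonneg _)
      ((hloc i).trans (by gcongr; exact hm i))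
  have hoverlap := sum_setIntegral_le_mul_integral hG.integrable_sq
    (ae_of_all _ fun x => sq_nonneg (G x)) hωs hκs
  have hsq : ∫ x, ‖∑ i, g i x‖ ^ 2 ∂μ ≤ κ * κs * m ^ 2 * ∫ x, (G x) ^ 2 ∂μ :=
    calc ∫ x, ‖∑ i, g i x‖ ^ 2 ∂μ ≤ κ * ∑ i, ∫ x, ‖g i x‖ ^ 2 ∂μ :=
          integral_norm_sum_sq_le_mul_sum hg hsupp hκ
      _ ≤ κ * (m ^ 2 * ∑ i, ∫ x in ωs i, (G x) ^ 2 ∂μ) := by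
          gcongr κ * ?_
          rw [mul_sum]
          exact sum_le_sum fun i _ => hloc_sq i
      _ ≤ κ * (m ^ 2 * (κs * ∫ x, (G x) ^ 2 ∂μ)) := by gcongr
      _ = κ * κs * m ^ 2 * ∫ x, (G x) ^ 2 ∂μ := by ring
  calc √(∫ x, ‖∑ i, g i x‖ ^ 2 ∂μ) ≤ √(κ * κs * m ^ 2 * ∫ x, (G x) ^ 2 ∂μ) :=
        Real.sqrt_le_sqrt hsq
    _ = √(κ * κs) * m * √(∫ x, (G x) ^ 2 ∂μ) := by
        rw [Real.sqrt_mul (by positivity), Real.sqrt_mul (by positivity), Real.sqrt_sq hm0]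

/-- Abstract form of Theorem 1.1: global error bound from local approximation errors.
If each `g i` vanishes a.e. outside `ω i ⊆ ω* i`, a.e. every point lies in at most `κ`
of the sets `ω i` and at most `κ*` of the sets `ω* i`, and `‖g i‖_{L²} ≤ ε i ‖G·1_{ω* i}‖_{L²}`,
then `‖∑ g i‖_{L²} ≤ √(κ κ*) (max ε i) ‖G‖_{L²}`. -/
theorem global_error_from_local_errors
    {Ω : Type*} [MeasurableSpace Ω] (μ : Measure Ω)
    {E : Type*} [NormedAddCommGroup E] [InnerProductSpace ℝ E] [CompleteSpace E]
    (M : ℕ) (hM : 0 < M) (g : Fin M → Ω → E) (ω ωs : Fin M → Set Ω) (κ κs : ℕ)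
    (G : Ω → ℝ) (ε : Fin M → ℝ)
    (hg : ∀ i, MemLp (g i) 2 μ)
    (hG : MemLp G 2 μ)
    (hω : ∀ i, MeasurableSet (ω i))
    (hωs : ∀ i, MeasurableSet (ωs i))
    (hsub : ∀ i, ω i ⊆ ωs i)
    (hsupp : ∀ i, ∀ᵐ x ∂μ, x ∉ ω i → g i x = 0)
    (hκ : ∀ᵐ x ∂μ, ∑ i, (ω i).indicator (fun _ => (1 : ℝ)) x ≤ (κ : ℝ))
    (hκs : ∀ᵐ x ∂μ, ∑ i, (ωs i).indicator (fun _ => (1 : ℝ)) x ≤ (κs : ℝ))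
    (hε : ∀ i, 0 ≤ ε i)
    (hloc : ∀ i, Real.sqrt (∫ x, ‖g i x‖ ^ 2 ∂μ) ≤
      ε i * Real.sqrt (∫ x in ωs i, (G x) ^ 2 ∂μ)) :
    Real.sqrt (∫ x, ‖∑ i, g i x‖ ^ 2 ∂μ) ≤
      Real.sqrt ((κ : ℝ) * (κs : ℝ)) *
        (Finset.univ.sup' ⟨⟨0, hM⟩, Finset.mem_univ _⟩ ε) *
        Real.sqrt (∫ x, (G x) ^ 2 ∂μ) :=
  global_error_from_local_errors_general μ M hM g ω ωs κ κs G ε hg hG hωs hsupp hκ hκs hε hloc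
end

section
/- Upper bound half of Theorem 3.4 (the singular-vector space attains the Kolmogorov n-width): for every n with n + 1 ≤ N, the subspace Q̂ := span{P φ_1, …, P φ_n} ⊆ K satisfies dist(P u, Q̂) ≤ √μ_{n+1} · ‖u‖ for every u ∈ H; in particular, the Kolmogorov n-width d_n := inf over subspaces Q ⊆ K with dim Q ≤ n of sup_{u ∈ H, ‖u‖ ≤ 1} dist(P u, Q) satisfies d_n ≤ √μ_{n+1}. -/
open scoped RealInnerProductSpace

/-- Upper bound half of Theorem 3.4: the span `Q̂` of the first `n` left singular vectors
`P φ_1, …, P φ_n` satisfies `dist(P u, Q̂) ≤ √μ_{n+1} ‖u‖` for every `u ∈ H`; in particular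
the Kolmogorov `n`-width `d_n` is at most `√μ_{n+1}`. -/
theorem n_width_upper_bound
    {H K : Type*} [NormedAddCommGroup H] [InnerProductSpace ℝ H] [FiniteDimensional ℝ H]
    [NormedAddCommGroup K] [InnerProductSpace ℝ K]
    (N : ℕ) (hN : Module.finrank ℝ H = N)
    (P : H →ₗ[ℝ] K)
    (b : OrthonormalBasis (Fin N) ℝ H)
    (μ : Fin N → ℝ) (hmono : Antitone μ) (hnonneg : ∀ k, 0 ≤ μ k)
    (hsing : ∀ j k : Fin N, ⟪P (b j), P (b k)⟫ = if j = k then μ j else 0) :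
    ∀ (n : ℕ) (hn : n + 1 ≤ N),
      (∀ u : H,
        Metric.infDist (P u)
          (Submodule.span ℝ (Set.range fun i : Fin n => P (b (Fin.castLE (Nat.le_of_succ_le hn) i))) : Set K)
        ≤ Real.sqrt (μ ⟨n, hn⟩) * ‖u‖) ∧
      (⨅ Q : {Q : Submodule ℝ K // Module.finrank ℝ Q ≤ n},
          ⨆ u : {u : H // ‖u‖ ≤ 1}, Metric.infDist (P u.1) (Q.1 : Set K))
        ≤ Real.sqrt (μ ⟨n, hn⟩) := by
  intro n hn
  set Qhat : Submodule ℝ K :=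
    Submodule.span ℝ (Set.range fun i : Fin n => P (b (Fin.castLE (Nat.le_of_succ_le hn) i)))
  have key : ∀ u : H,
      Metric.infDist (P u) (Qhat : Set K) ≤ Real.sqrt (μ ⟨n, hn⟩) * ‖u‖ := by
    intro u
    set c : Fin N → ℝ := fun k => ⟪b k, u⟫
    set S : Finset (Fin N) := Finset.univ.filter (fun k : Fin N => n ≤ (k : ℕ))
    set q : K := ∑ k ∈ Finset.univ.filter (fun k : Fin N => (k : ℕ) < n), c k • P (b k)
    have hqmem : q ∈ Qhat := by
      apply Submodule.sum_mem
      intro k hk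
      apply Submodule.smul_mem
      apply Submodule.subset_span
      simp only [Finset.mem_filter] at hk
      exact ⟨(⟨(k : ℕ), hk.2⟩ : Fin n), by simp⟩
    have hu : ∑ k : Fin N, c k • b k = u := b.sum_repr' u
    have hsplit : P u = q + ∑ k ∈ S, c k • P (b k) := by
      have := congrArg P hu
      rw [map_sum] at this
      simp only [map_smul] at this
      rw [← this]
      rw [← Finset.sum_filter_add_sum_filter_not Finset.univ (fun k : Fin N => (k : ℕ) < n)
        (fun k => c k • P (b k))]
      congr 1
      apply Finset.sum_congr _ (fun _ _ => rfl)
      ext k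
      simp [S, Nat.not_lt, le_iff_lt_or_eq]
    have hdist : Metric.infDist (P u) (Qhat : Set K) ≤ ‖P u - q‖ := by
      have := Metric.infDist_le_dist_of_mem (x := P u) hqmem
      rwa [dist_eq_norm] at this
    have hnormsq : ‖P u - q‖ ^ 2 = ∑ k ∈ S, c k ^ 2 * μ k := by
      have hPuq : P u - q = ∑ k ∈ S, c k • P (b k) := by rw [hsplit]; abel
      rw [← real_inner_self_eq_norm_sq, hPuq, sum_inner]
      apply Finset.sum_congr rfl
      intro k hk
      rw [inner_sum]
      rw [Finset.sum_eq_single k]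
      · rw [real_inner_smul_left, real_inner_smul_right, hsing]
        simp [pow_two]; ring
      · intro j hj hjk
        rw [real_inner_smul_left, real_inner_smul_right, hsing]
        simp [hjk, Ne.symm hjk]
      · intro h; exact absurd hk h
    have hle1 : ∑ k ∈ S, c k ^ 2 * μ k ≤ μ ⟨n, hn⟩ * ∑ k ∈ S, c k ^ 2 := by
      rw [Finset.mul_sum]
      apply Finset.sum_le_sum
      intro k hk
      simp only [S, Finset.mem_filter] at hk
      have : μ k ≤ μ ⟨n, hn⟩ := hmono (by exact hk.2)
      have hc2 : (0:ℝ) ≤ c k ^ 2 := sq_nonneg _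
      nlinarith
    have hparseval : ∑ k : Fin N, c k ^ 2 = ‖u‖ ^ 2 := by
      have : ⟪u, u⟫ = ∑ k : Fin N, c k * ⟪b k, u⟫ := by
        conv_lhs => rw [← hu, sum_inner]
        apply Finset.sum_congr rfl
        intro k _
        rw [real_inner_smul_left, hu]
      rw [← real_inner_self_eq_norm_sq, this]
      apply Finset.sum_congr rfl
      intro k _
      rw [pow_two]
    have hle2 : ∑ k ∈ S, c k ^ 2 ≤ ‖u‖ ^ 2 := by
      rw [← hparseval]
      exact Finset.sum_le_sum_of_subset_of_nonneg (Finset.subset_univ _)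
        (fun k _ _ => sq_nonneg _)
    have hfin : ‖P u - q‖ ^ 2 ≤ μ ⟨n, hn⟩ * ‖u‖ ^ 2 := by
      rw [hnormsq]
      calc ∑ k ∈ S, c k ^ 2 * μ k ≤ μ ⟨n, hn⟩ * ∑ k ∈ S, c k ^ 2 := hle1
        _ ≤ μ ⟨n, hn⟩ * ‖u‖ ^ 2 := by
            apply mul_le_mul_of_nonneg_left hle2 (hnonneg _)
    have hnorm : ‖P u - q‖ ≤ Real.sqrt (μ ⟨n, hn⟩) * ‖u‖ := by
      have h1 : ‖P u - q‖ = Real.sqrt (‖P u - q‖ ^ 2) := by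
        rw [Real.sqrt_sq (norm_nonneg _)]
      rw [h1]
      have h2 : Real.sqrt (μ ⟨n, hn⟩) * ‖u‖ = Real.sqrt (μ ⟨n, hn⟩ * ‖u‖ ^ 2) := by
        rw [Real.sqrt_mul (hnonneg _), Real.sqrt_sq (norm_nonneg _)]
      rw [h2]
      exact Real.sqrt_le_sqrt hfin
    exact hdist.trans hnorm
  refine ⟨key, ?_⟩
  classical
  have hQrank : Module.finrank ℝ Qhat ≤ n := by
    have he : Qhat = Submodule.span ℝ
        ↑(Finset.univ.image fun i : Fin n => P (b (Fin.castLE (Nat.le_of_succ_le hn) i))) := by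
      congr 1
      rw [Finset.coe_image, Finset.coe_univ, Set.image_univ]
    rw [he]
    exact (finrank_span_finset_le_card _).trans (Finset.card_image_le.trans (by simp))
  have hbdd : BddBelow (Set.range fun Q : {Q : Submodule ℝ K // Module.finrank ℝ Q ≤ n} =>
      ⨆ u : {u : H // ‖u‖ ≤ 1}, Metric.infDist (P u.1) (Q.1 : Set K)) := by
    refine ⟨0, ?_⟩
    rintro x ⟨Q, rfl⟩
    apply Real.iSup_nonneg
    intro u
    exact Metric.infDist_nonneg
  have : (⨅ Q : {Q : Submodule ℝ K // Module.finrank ℝ Q ≤ n},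
      ⨆ u : {u : H // ‖u‖ ≤ 1}, Metric.infDist (P u.1) (Q.1 : Set K))
      ≤ ⨆ u : {u : H // ‖u‖ ≤ 1}, Metric.infDist (P u.1) (Qhat : Set K) :=
    ciInf_le hbdd ⟨Qhat, hQrank⟩
  refine this.trans ?_
  haveI : Nonempty {u : H // ‖u‖ ≤ 1} := ⟨⟨0, by simp⟩⟩
  apply ciSup_le
  intro u
  calc Metric.infDist (P u.1) (Qhat : Set K) ≤ Real.sqrt (μ ⟨n, hn⟩) * ‖u.1‖ := key u.1
    _ ≤ Real.sqrt (μ ⟨n, hn⟩) * 1 := by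
        apply mul_le_mul_of_nonneg_left u.2 (Real.sqrt_nonneg _)
    _ = Real.sqrt (μ ⟨n, hn⟩) := mul_one _
end

section
/- Abstract form of Lemma 3.9 (well-posedness of the constrained saddle-point problem): there exists a unique pair (z, p) ∈ V × Q such that a(z, φ) + a(φ, p) = F(φ) for all φ ∈ V and a(z, ξ) = 0 for all ξ ∈ Q; moreover ‖z‖_a + ‖p‖_a ≤ (2/√α) · ‖F‖, where ‖F‖ is the operator norm of F. -/
/-!
Let `w` be the Lax–Milgram solution of `a(w, ·) = F` on `V` and `p` that of `a(p, ·) = F` on `Q`;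
by symmetry of `a`, `(w - p, p)` solves the saddle-point system. Testing the system with `z` and
with `p` gives the energy identities `a(z, z) = F(z)` and `a(p, p) = F(p)`; together with
coercivity they bound both `a`-norms by `‖F‖ / √α`, and applied to the difference of two
solutions (a solution for `F = 0`) they give uniqueness.
-/

section LaxMilgram

variable {E : Type*} [NormedAddCommGroup E] [InnerProductSpace ℝ E] [CompleteSpace E]

theorem IsCoercive.exists_forall_apply_eq {B : E →L[ℝ] E →L[ℝ] ℝ} (hB : IsCoercive B)
    (f : StrongDual ℝ E) : ∃ u, ∀ v, B u v = f v :=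
  ⟨hB.continuousLinearEquivOfBilin.symm ((InnerProductSpace.toDual ℝ E).symm f), fun v => by
    rw [← hB.continuousLinearEquivOfBilin_apply, ContinuousLinearEquiv.apply_symm_apply,
      InnerProductSpace.toDual_symm_apply]⟩

theorem LinearMap.exists_forall_apply_eq_of_bounded_of_coercive (a : E →ₗ[ℝ] E →ₗ[ℝ] ℝ)
    {M α : ℝ} (hα : 0 < α) (hbound : ∀ u v, |a u v| ≤ M * ‖u‖ * ‖v‖)
    (hcoer : ∀ v, α * ‖v‖ ^ 2 ≤ a v v) (f : StrongDual ℝ E) : ∃ u, ∀ v, a u v = f v :=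
  IsCoercive.exists_forall_apply_eq (B := a.mkContinuous₂ M hbound)
    ⟨α, hα, fun u => by simpa [sq, mul_assoc] using hcoer u⟩ f

end LaxMilgram

section SaddlePoint

variable {R V : Type*} [CommRing R] [AddCommGroup V] [Module R V]
  {a : V →ₗ[R] V →ₗ[R] R} {Q : Submodule R V} {F G : V → R} {z z' p p' : V}

structure IsSaddlePoint (a : V →ₗ[R] V →ₗ[R] R) (Q : Submodule R V) (F : V → R) (z p : V) :
    Prop where
  mem : p ∈ Q
  apply_add_apply : ∀ φ, a z φ + a φ p = F φ
  apply_eq_zero : ∀ ξ ∈ Q, a z ξ = 0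

theorem isSaddlePoint_sub (hsymm : ∀ u v, a u v = a v u) (hz : ∀ φ, a z φ = F φ)
    (hp : p ∈ Q) (hpQ : ∀ ξ ∈ Q, a p ξ = F ξ) : IsSaddlePoint a Q F (z - p) p where
  mem := hp
  apply_add_apply φ := by
    rw [map_sub, LinearMap.sub_apply, hz, hsymm φ p, sub_add_cancel]
  apply_eq_zero ξ hξ := by
    rw [map_sub, LinearMap.sub_apply, hz, hpQ ξ hξ, sub_self]

namespace IsSaddlePoint

theorem sub (h : IsSaddlePoint a Q F z p) (h' : IsSaddlePoint a Q G z' p') :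
    IsSaddlePoint a Q (F - G) (z - z') (p - p') where
  mem := Q.sub_mem h.mem h'.mem
  apply_add_apply φ := by
    rw [map_sub, LinearMap.sub_apply, map_sub, Pi.sub_apply, ← h.apply_add_apply φ,
      ← h'.apply_add_apply φ]
    ring
  apply_eq_zero ξ hξ := by
    rw [map_sub, LinearMap.sub_apply, h.apply_eq_zero ξ hξ, h'.apply_eq_zero ξ hξ, sub_zero]

theorem apply_self_fst (h : IsSaddlePoint a Q F z p) : a z z = F z := by
  simpa [h.apply_eq_zero p h.mem] using h.apply_add_apply z

theorem apply_self_snd (h : IsSaddlePoint a Q F z p) : a p p = F p := by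
  simpa [h.apply_eq_zero p h.mem] using h.apply_add_apply p

theorem eq (hdef : ∀ v, a v v = 0 → v = 0) (h : IsSaddlePoint a Q F z p)
    (h' : IsSaddlePoint a Q F z' p') : z = z' ∧ p = p' := by
  have hdiff := h.sub h'
  rw [sub_self] at hdiff
  exact ⟨sub_eq_zero.mp (hdef _ hdiff.apply_self_fst),
    sub_eq_zero.mp (hdef _ hdiff.apply_self_snd)⟩

end IsSaddlePoint

end SaddlePoint

theorem sqrt_apply_self_le_of_apply_self_eq {E : Type*} [SeminormedAddCommGroup E]
    [NormedSpace ℝ E] (a : E →ₗ[ℝ] E →ₗ[ℝ] ℝ) {α : ℝ} (hα : 0 < α) (F : StrongDual ℝ E)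
    {v : E} (hcoer : α * ‖v‖ ^ 2 ≤ a v v) (hv : a v v = F v) :
    √(a v v) ≤ ‖F‖ / √α := by
  have hFv : a v v ≤ ‖F‖ * ‖v‖ := hv ▸ (le_abs_self _).trans (F.le_opNorm v)
  have hnorm : α * ‖v‖ ≤ ‖F‖ := by
    rcases (norm_nonneg v).eq_or_lt with h0 | hpos
    · rw [← h0, mul_zero]
      exact norm_nonneg F
    · nlinarith
  rw [Real.sqrt_le_iff, div_pow, Real.sq_sqrt hα.le, le_div_iff₀ hα]
  exact ⟨by positivity, by nlinarith [norm_nonneg F]⟩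

theorem saddle_point_well_posed_general
    {V : Type*} [NormedAddCommGroup V] [InnerProductSpace ℝ V] [CompleteSpace V]
    (a : V →ₗ[ℝ] V →ₗ[ℝ] ℝ) (M α : ℝ) (hα : 0 < α)
    (hsymm : ∀ u v, a u v = a v u)
    (hbound : ∀ u v, |a u v| ≤ M * ‖u‖ * ‖v‖)
    (hcoer : ∀ v, α * ‖v‖ ^ 2 ≤ a v v)
    (Q : Submodule ℝ V) (hQ : IsClosed (Q : Set V))
    (F : V →L[ℝ] ℝ) :
    (∃! zp : V × V, zp.2 ∈ Q ∧ (∀ φ : V, a zp.1 φ + a φ zp.2 = F φ) ∧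
        (∀ ξ ∈ Q, a zp.1 ξ = 0)) ∧
    (∀ z p : V, p ∈ Q → (∀ φ : V, a z φ + a φ p = F φ) → (∀ ξ ∈ Q, a z ξ = 0) →
      Real.sqrt (a z z) + Real.sqrt (a p p) ≤ (2 / Real.sqrt α) * ‖F‖) := by
  have hdef : ∀ v, a v v = 0 → v = 0 := fun v hv => by
    have hsq : ‖v‖ ^ 2 ≤ 0 := nonpos_of_mul_nonpos_right (hv ▸ hcoer v) hα
    exact norm_eq_zero.mp (pow_eq_zero_iff two_ne_zero |>.mp (le_antisymm hsq (sq_nonneg _)))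
  have : CompleteSpace Q := hQ.completeSpace_coe
  obtain ⟨w, hw⟩ := a.exists_forall_apply_eq_of_bounded_of_coercive hα hbound hcoer F
  obtain ⟨p, hp⟩ := (a.compl₁₂ Q.subtype Q.subtype).exists_forall_apply_eq_of_bounded_of_coercive
    hα (fun u v => hbound u v) (fun v => hcoer v) (F.comp Q.subtypeL)
  have hsol : IsSaddlePoint a Q F (w - p) p :=
    isSaddlePoint_sub hsymm hw p.2 fun ξ hξ => hp ⟨ξ, hξ⟩
  refine ⟨⟨(w - p, p), ⟨hsol.mem, hsol.apply_add_apply, hsol.apply_eq_zero⟩,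
    fun zp ⟨hmem, hF, hzero⟩ => ?_⟩, fun z p hmem hF hzero => ?_⟩
  · exact Prod.ext_iff.mpr (IsSaddlePoint.eq hdef ⟨hmem, hF, hzero⟩ hsol)
  · have h : IsSaddlePoint a Q F z p := ⟨hmem, hF, hzero⟩
    calc √(a z z) + √(a p p) ≤ ‖F‖ / √α + ‖F‖ / √α :=
          add_le_add (sqrt_apply_self_le_of_apply_self_eq a hα F (hcoer z) h.apply_self_fst)
            (sqrt_apply_self_le_of_apply_self_eq a hα F (hcoer p) h.apply_self_snd)
      _ = 2 / √α * ‖F‖ := by ring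

/-- Abstract form of Lemma 3.9: well-posedness of the constrained saddle-point problem.
For a bounded, coercive, symmetric bilinear form `a` on a Hilbert space `V`, a closed
subspace `Q ⊆ V` and a continuous linear functional `F`, there is a unique pair
`(z, p) ∈ V × Q` with `a(z, φ) + a(φ, p) = F(φ)` for all `φ ∈ V` and `a(z, ξ) = 0`
for all `ξ ∈ Q`; moreover `‖z‖_a + ‖p‖_a ≤ (2/√α) ‖F‖`. -/
theorem saddle_point_well_posed
    {V : Type*} [NormedAddCommGroup V] [InnerProductSpace ℝ V] [CompleteSpace V]
    (a : V →ₗ[ℝ] V →ₗ[ℝ] ℝ) (M α : ℝ) (hM : 0 < M) (hα : 0 < α)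
    (hsymm : ∀ u v, a u v = a v u)
    (hbound : ∀ u v, |a u v| ≤ M * ‖u‖ * ‖v‖)
    (hcoer : ∀ v, α * ‖v‖ ^ 2 ≤ a v v)
    (Q : Submodule ℝ V) (hQ : IsClosed (Q : Set V))
    (F : V →L[ℝ] ℝ) :
    (∃! zp : V × V, zp.2 ∈ Q ∧ (∀ φ : V, a zp.1 φ + a φ zp.2 = F φ) ∧
        (∀ ξ ∈ Q, a zp.1 ξ = 0)) ∧
    (∀ z p : V, p ∈ Q → (∀ φ : V, a z φ + a φ p = F φ) → (∀ ξ ∈ Q, a z ξ = 0) →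
      Real.sqrt (a z z) + Real.sqrt (a p p) ≤ (2 / Real.sqrt α) * ‖F‖) :=
  saddle_point_well_posed_general a M α hα hsymm hbound hcoer Q hQ F
end

section
/- Abstract form of Lemma 3.10 (quasi-optimality of Galerkin approximation of the constrained saddle-point problem): let (z, p) ∈ V × Q be the unique pair with a(z, φ) + a(φ, p) = F(φ) for all φ ∈ V and a(z, ξ) = 0 for all ξ ∈ Q. Then there exists a unique pair (z_h, p_h) ∈ V_h × Q_h with a(z_h, φ) + a(φ, p_h) = F(φ) for all φ ∈ V_h and a(z_h, ξ) = 0 for all ξ ∈ Q_h; moreover there is a constant C, depending only on the coercivity constant α and the continuity constant M of a (and not on V_h, Q_h, F), such that ‖z − z_h‖_a + ‖p − p_h‖_a ≤ C · ( inf_{v ∈ V_h} ‖z − v‖_a + inf_{q ∈ Q_h} ‖p − q‖_a ). -/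
/-!
By symmetry of `a`, `a z φ + a φ p = a (z + p) φ`, so the saddle-point problem on `(W, P)` with
`P ≤ W` decouples into two Galerkin problems: `p` solves `a p ξ = F ξ` on `P`, and `z + p` solves
`a u φ = F φ` on `W`. This holds for the continuous pair `(V, Q)` and for the discrete pair
`(Vh, Qh)` alike, so Lax–Milgram on `Qh` and `Vh` gives existence and uniqueness, and `ph`,
`zh + ph` are the `a`-orthogonal projections of `p`, `z + p`. Best approximation then bounds
`‖p - ph‖_a` by `‖p - q‖_a` and `‖z + p - (zh + ph)‖_a` by `‖z - v‖_a + ‖p - q‖_a`, and the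
triangle inequality for `‖z - zh‖_a` gives the constant `C = 3`.
-/

variable {V : Type*}

section Algebraic

variable [AddCommGroup V] [Module ℝ V] {a : V →ₗ[ℝ] V →ₗ[ℝ] ℝ}

def IsGalerkinSolution (a : V →ₗ[ℝ] V →ₗ[ℝ] ℝ) (S : Submodule ℝ V) (G : V → ℝ) (u : V) : Prop :=
  u ∈ S ∧ ∀ ξ ∈ S, a u ξ = G ξ

def IsSaddlePointSolution (a : V →ₗ[ℝ] V →ₗ[ℝ] ℝ) (F : V → ℝ) (W P : Submodule ℝ V)
    (zp : V × V) : Prop :=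
  zp.1 ∈ W ∧ zp.2 ∈ P ∧ (∀ φ ∈ W, a zp.1 φ + a φ zp.2 = F φ) ∧ (∀ ξ ∈ P, a zp.1 ξ = 0)

theorem sqrt_apply_add_le (hsymm : ∀ u v, a u v = a v u) (hnn : ∀ v, 0 ≤ a v v) (x y : V) :
    √(a (x + y) (x + y)) ≤ √(a x x) + √(a y y) := by
  have hcs : a x y ≤ √(a x x) * √(a y y) := by
    rw [← Real.sqrt_mul (hnn x)]
    refine Real.le_sqrt_of_sq_le ?_
    simpa only [sq, ← hsymm x y] using
      LinearMap.BilinForm.apply_mul_apply_le_of_forall_zero_le a hnn x y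
  refine Real.sqrt_le_iff.2 ⟨by positivity, ?_⟩
  have hexp : a (x + y) (x + y) = a x x + 2 * a x y + a y y := by
    simp only [map_add, LinearMap.add_apply, hsymm y x]; ring
  rw [hexp, add_sq, Real.sq_sqrt (hnn x), Real.sq_sqrt (hnn y)]
  linarith

theorem sqrt_apply_sub_le (hsymm : ∀ u v, a u v = a v u) (hnn : ∀ v, 0 ≤ a v v) (x y : V) :
    √(a (x - y) (x - y)) ≤ √(a x x) + √(a y y) := by
  simpa only [sub_eq_add_neg, map_neg, LinearMap.neg_apply, neg_neg] using
    sqrt_apply_add_le hsymm hnn x (-y)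

theorem IsGalerkinSolution.unique (hdef : ∀ v, a v v = 0 → v = 0) {S : Submodule ℝ V}
    {G : V → ℝ} {u₁ u₂ : V} (h₁ : IsGalerkinSolution a S G u₁)
    (h₂ : IsGalerkinSolution a S G u₂) : u₁ = u₂ := by
  have hmem : u₁ - u₂ ∈ S := S.sub_mem h₁.1 h₂.1
  refine sub_eq_zero.1 (hdef _ ?_)
  rw [LinearMap.map_sub₂, h₁.2 _ hmem, h₂.2 _ hmem, sub_self]

/-- Céa's lemma for a symmetric form: `u - uT` is `a`-orthogonal to `T`, so Pythagoras makes
`uT` a best approximation of `u` in `T`. -/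
theorem IsGalerkinSolution.sqrt_apply_sub_le (hsymm : ∀ u v, a u v = a v u)
    (hnn : ∀ v, 0 ≤ a v v) {S T : Submodule ℝ V} {G : V → ℝ} {u uT q : V}
    (hu : IsGalerkinSolution a S G u) (huT : IsGalerkinSolution a T G uT) (hTS : T ≤ S)
    (hq : q ∈ T) : √(a (u - uT) (u - uT)) ≤ √(a (u - q) (u - q)) := by
  have hmem : uT - q ∈ T := T.sub_mem huT.1 hq
  have horth : a (u - uT) (uT - q) = 0 := by
    rw [LinearMap.map_sub₂, hu.2 _ (hTS hmem), huT.2 _ hmem, sub_self]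
  have hpyth : a (u - q) (u - q) = a (u - uT) (u - uT) + a (uT - q) (uT - q) := by
    have hsplit : u - q = (u - uT) + (uT - q) := by abel
    rw [hsplit, LinearMap.map_add₂, map_add, map_add, hsymm (uT - q) (u - uT), horth]
    ring
  exact Real.sqrt_le_sqrt (by linarith [hnn (uT - q)])

theorem isSaddlePointSolution_iff (hsymm : ∀ u v, a u v = a v u) {F : V → ℝ}
    {W P : Submodule ℝ V} (hPW : P ≤ W) {z p : V} :
    IsSaddlePointSolution a F W P (z, p) ↔
      IsGalerkinSolution a P F p ∧ IsGalerkinSolution a W F (z + p) := by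
  constructor
  · rintro ⟨hz, hp, heq, horth⟩
    refine ⟨⟨hp, fun ξ hξ => ?_⟩, ⟨W.add_mem hz (hPW hp), fun φ hφ => ?_⟩⟩
    · rw [hsymm, ← heq ξ (hPW hξ), horth ξ hξ, zero_add]
    · rw [map_add, LinearMap.add_apply, hsymm p, heq φ hφ]
  · rintro ⟨⟨hp, hpF⟩, ⟨hzp, hzpF⟩⟩
    have hz : z ∈ W := by simpa using W.sub_mem hzp (hPW hp)
    refine ⟨hz, hp, fun φ hφ => ?_, fun ξ hξ => ?_⟩
    · have := hzpF φ hφ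
      rw [map_add, LinearMap.add_apply, hsymm p] at this
      exact this
    · have := hzpF ξ (hPW hξ)
      rw [map_add, LinearMap.add_apply, hpF ξ hξ, add_eq_right] at this
      exact this

theorem existsUnique_isSaddlePointSolution (hsymm : ∀ u v, a u v = a v u)
    (hdef : ∀ v, a v v = 0 → v = 0) {F : V → ℝ} {W P : Submodule ℝ V} (hPW : P ≤ W)
    (hP : ∃ p, IsGalerkinSolution a P F p) (hW : ∃ u, IsGalerkinSolution a W F u) :
    ∃! zp : V × V, IsSaddlePointSolution a F W P zp := by
  obtain ⟨p, hp⟩ := hP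
  obtain ⟨u, hu⟩ := hW
  refine ⟨(u - p, p), (isSaddlePointSolution_iff hsymm hPW).2 ⟨hp, by simpa using hu⟩, ?_⟩
  rintro ⟨z', p'⟩ hsol
  obtain ⟨hp', hu'⟩ := (isSaddlePointSolution_iff hsymm hPW).1 hsol
  obtain rfl := hp'.unique hdef hp
  obtain rfl := hu'.unique hdef hu
  simp

theorem IsSaddlePointSolution.sqrt_add_sqrt_le (hsymm : ∀ u v, a u v = a v u)
    (hnn : ∀ v, 0 ≤ a v v) {F : V → ℝ} {W P Wh Ph : Submodule ℝ V} (hPW : P ≤ W)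
    (hWh : Wh ≤ W) (hPh : Ph ≤ P ⊓ Wh) {z p zh ph v q : V}
    (hsol : IsSaddlePointSolution a F W P (z, p))
    (hsolh : IsSaddlePointSolution a F Wh Ph (zh, ph)) (hv : v ∈ Wh) (hq : q ∈ Ph) :
    √(a (z - zh) (z - zh)) + √(a (p - ph) (p - ph)) ≤
      3 * (√(a (z - v) (z - v)) + √(a (p - q) (p - q))) := by
  obtain ⟨hPhP, hPhWh⟩ := le_inf_iff.1 hPh
  obtain ⟨hp, hu⟩ := (isSaddlePointSolution_iff hsymm hPW).1 hsol
  obtain ⟨hph, huh⟩ := (isSaddlePointSolution_iff hsymm hPhWh).1 hsolh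
  have hp_best : √(a (p - ph) (p - ph)) ≤ √(a (p - q) (p - q)) :=
    hp.sqrt_apply_sub_le hsymm hnn hph hPhP hq
  have hu_best : √(a (z + p - (zh + ph)) (z + p - (zh + ph))) ≤
      √(a (z - v) (z - v)) + √(a (p - q) (p - q)) := by
    calc _ ≤ √(a (z + p - (v + q)) (z + p - (v + q))) :=
          hu.sqrt_apply_sub_le hsymm hnn huh hWh (Wh.add_mem hv (hPhWh hq))
      _ ≤ _ := by
          rw [show z + p - (v + q) = (z - v) + (p - q) by abel]
          exact sqrt_apply_add_le hsymm hnn _ _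
  have hz : √(a (z - zh) (z - zh)) ≤
      √(a (z + p - (zh + ph)) (z + p - (zh + ph))) + √(a (p - ph) (p - ph)) := by
    rw [show z - zh = (z + p - (zh + ph)) - (p - ph) by abel]
    exact sqrt_apply_sub_le hsymm hnn _ _
  linarith [Real.sqrt_nonneg (a (z - v) (z - v))]

end Algebraic

theorem exists_isGalerkinSolution [NormedAddCommGroup V] [InnerProductSpace ℝ V]
    {a : V →ₗ[ℝ] V →ₗ[ℝ] ℝ} {α M : ℝ} (hα : 0 < α)
    (hbound : ∀ u v, |a u v| ≤ M * ‖u‖ * ‖v‖) (hcoer : ∀ v, α * ‖v‖ ^ 2 ≤ a v v)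
    (S : Submodule ℝ V) [CompleteSpace S] (G : V →L[ℝ] ℝ) :
    ∃ u, IsGalerkinSolution a S G u := by
  let B : S →L[ℝ] S →L[ℝ] ℝ :=
    (a.mkContinuous₂ M fun u v => by simpa only [Real.norm_eq_abs] using hbound u v).bilinearComp
      S.subtypeL S.subtypeL
  have hB : IsCoercive B := ⟨α, hα, fun u => by simpa [B, sq, mul_assoc] using hcoer u⟩
  let u : S := hB.continuousLinearEquivOfBilin.symm ((InnerProductSpace.toDual ℝ S).symm (G.comp S.subtypeL))
  refine ⟨u, u.2, fun ξ hξ => ?_⟩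
  have := hB.continuousLinearEquivOfBilin_apply u ⟨ξ, hξ⟩
  simpa [u, B] using this.symm

theorem saddle_point_galerkin_quasi_optimal_general (α M : ℝ) (hα : 0 < α) :
    ∃ C : ℝ, 0 < C ∧
      ∀ (V : Type) [NormedAddCommGroup V] [InnerProductSpace ℝ V] [CompleteSpace V]
        (a : V →ₗ[ℝ] V →ₗ[ℝ] ℝ),
        (∀ u v, a u v = a v u) →
        (∀ u v, |a u v| ≤ M * ‖u‖ * ‖v‖) →
        (∀ v, α * ‖v‖ ^ 2 ≤ a v v) →
        ∀ (Q : Submodule ℝ V), IsClosed (Q : Set V) →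
        ∀ (F : V →L[ℝ] ℝ)
          (Vh Qh : Submodule ℝ V), IsClosed (Vh : Set V) → IsClosed (Qh : Set V) →
          Qh ≤ Q ⊓ Vh →
        ∀ z p : V, p ∈ Q → (∀ φ : V, a z φ + a φ p = F φ) → (∀ ξ ∈ Q, a z ξ = 0) →
          (∃! zp : V × V, zp.1 ∈ Vh ∧ zp.2 ∈ Qh ∧
              (∀ φ ∈ Vh, a zp.1 φ + a φ zp.2 = F φ) ∧ (∀ ξ ∈ Qh, a zp.1 ξ = 0)) ∧
          (∀ zh ph : V, zh ∈ Vh → ph ∈ Qh →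
            (∀ φ ∈ Vh, a zh φ + a φ ph = F φ) → (∀ ξ ∈ Qh, a zh ξ = 0) →
            Real.sqrt (a (z - zh) (z - zh)) + Real.sqrt (a (p - ph) (p - ph)) ≤
              C * ((⨅ v : Vh, Real.sqrt (a (z - v) (z - v))) +
                   (⨅ q : Qh, Real.sqrt (a (p - q) (p - q))))) := by
  refine ⟨3, by norm_num, ?_⟩
  intro V _ _ _ a hsymm hbound hcoer Q _ F Vh Qh hVh hQh hQhle z p hp heq horth
  have hnn (v : V) : 0 ≤ a v v := (by positivity : 0 ≤ α * ‖v‖ ^ 2).trans (hcoer v)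
  have hdef (v : V) (hv : a v v = 0) : v = 0 := by
    have : α * ‖v‖ ^ 2 ≤ 0 := hv ▸ hcoer v
    simpa [hα.ne'] using le_antisymm (nonpos_of_mul_nonpos_right this hα) (by positivity)
  have : CompleteSpace Vh := hVh.completeSpace_coe
  have : CompleteSpace Qh := hQh.completeSpace_coe
  refine ⟨existsUnique_isSaddlePointSolution hsymm hdef (le_inf_iff.1 hQhle).2
    (exists_isGalerkinSolution hα hbound hcoer Qh F)
    (exists_isGalerkinSolution hα hbound hcoer Vh F), fun zh ph hzh hph heqh horthh => ?_⟩
  have hsol : IsSaddlePointSolution a F ⊤ Q (z, p) := ⟨trivial, hp, fun φ _ => heq φ, horth⟩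
  rw [← div_le_iff₀' three_pos]
  exact le_ciInf_add_ciInf fun v q => (div_le_iff₀' three_pos).2 <|
    hsol.sqrt_add_sqrt_le hsymm hnn le_top le_top hQhle ⟨hzh, hph, heqh, horthh⟩ v.2 q.2

/-- Abstract form of Lemma 3.10: quasi-optimality of the Galerkin approximation of the
constrained saddle-point problem.  There is a constant `C > 0`, depending only on the
coercivity constant `α` and continuity constant `M` (in particular not on `V_h`, `Q_h`,
`F`), such that: in the above setting the discrete problem has a unique solution
`(z_h, p_h) ∈ V_h × Q_h`, and
`‖z − z_h‖_a + ‖p − p_h‖_a ≤ C (inf_{v ∈ V_h} ‖z − v‖_a + inf_{q ∈ Q_h} ‖p − q‖_a)`. -/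
theorem saddle_point_galerkin_quasi_optimal (α M : ℝ) (hα : 0 < α) (hM : 0 < M) :
    ∃ C : ℝ, 0 < C ∧
      ∀ (V : Type) [NormedAddCommGroup V] [InnerProductSpace ℝ V] [CompleteSpace V]
        (a : V →ₗ[ℝ] V →ₗ[ℝ] ℝ),
        (∀ u v, a u v = a v u) →
        (∀ u v, |a u v| ≤ M * ‖u‖ * ‖v‖) →
        (∀ v, α * ‖v‖ ^ 2 ≤ a v v) →
        ∀ (Q : Submodule ℝ V), IsClosed (Q : Set V) →
        ∀ (F : V →L[ℝ] ℝ)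
          (Vh Qh : Submodule ℝ V), IsClosed (Vh : Set V) → IsClosed (Qh : Set V) →
          Qh ≤ Q ⊓ Vh →
        ∀ z p : V, p ∈ Q → (∀ φ : V, a z φ + a φ p = F φ) → (∀ ξ ∈ Q, a z ξ = 0) →
          (∃! zp : V × V, zp.1 ∈ Vh ∧ zp.2 ∈ Qh ∧
              (∀ φ ∈ Vh, a zp.1 φ + a φ zp.2 = F φ) ∧ (∀ ξ ∈ Qh, a zp.1 ξ = 0)) ∧
          (∀ zh ph : V, zh ∈ Vh → ph ∈ Qh →
            (∀ φ ∈ Vh, a zh φ + a φ ph = F φ) → (∀ ξ ∈ Qh, a zh ξ = 0) →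
            Real.sqrt (a (z - zh) (z - zh)) + Real.sqrt (a (p - ph) (p - ph)) ≤
              C * ((⨅ v : Vh, Real.sqrt (a (z - v) (z - v))) +
                   (⨅ q : Qh, Real.sqrt (a (p - q) (p - q))))) :=
  saddle_point_galerkin_quasi_optimal_general α M hα
end

section
/- Equivalence of the constrained eigenproblem and its mixed formulation (the equivalence of (3.5) and (5.1), and of (4.1)–(4.2) with (4.23)–(4.24)): let λ ∈ ℝ and φ ∈ W. Then a(φ, v) = λ · b(φ, v) holds for all v ∈ W if and only if there exists p ∈ Q such that a(φ, v) + a(v, p) = λ · b(φ, v) for all v ∈ V; moreover such p is unique. Conversely, if (φ, p) ∈ V × Q satisfies a(φ, v) + a(v, p) = λ · b(φ, v) for all v ∈ V together with a(φ, ξ) = 0 for all ξ ∈ Q, then φ ∈ W and a(φ, v) = λ · b(φ, v) for all v ∈ W. -/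
open InnerProductSpace

/-- Lax–Milgram type solvability on a closed subspace. -/
lemma helper_exists_lax {V : Type*} [NormedAddCommGroup V] [InnerProductSpace ℝ V]
    [CompleteSpace V]
    (B : V →L[ℝ] V →L[ℝ] ℝ) (α : ℝ) (hα : 0 < α)
    (hcoer : ∀ v, α * ‖v‖ * ‖v‖ ≤ B v v)
    (Q : Submodule ℝ V) (hQ : IsClosed (Q : Set V)) (F : V →L[ℝ] ℝ) :
    ∃ p ∈ Q, ∀ ξ ∈ Q, B ξ p = F ξ := by
  haveI : CompleteSpace Q := hQ.completeSpace_coe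
  set B₂ : Q →L[ℝ] Q →L[ℝ] ℝ := (B.comp Q.subtypeL).flip.comp Q.subtypeL with hB₂
  have hB₂app : ∀ x y : Q, B₂ x y = B (y : V) (x : V) := fun x y => rfl
  have hcoer₂ : IsCoercive B₂ := ⟨α, hα, fun u => by
    rw [hB₂app]
    simpa [Submodule.coe_norm] using hcoer (u : V)⟩
  set e := hcoer₂.continuousLinearEquivOfBilin
  set y : Q := (InnerProductSpace.toDual ℝ Q).symm (F.comp Q.subtypeL) with hy
  refine ⟨(e.symm y : V), (e.symm y).2, fun ξ hξ => ?_⟩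
  have h1 : ⟪e (e.symm y), (⟨ξ, hξ⟩ : Q)⟫_ℝ = B₂ (e.symm y) ⟨ξ, hξ⟩ :=
    hcoer₂.continuousLinearEquivOfBilin_apply (e.symm y) ⟨ξ, hξ⟩
  rw [e.apply_symm_apply] at h1
  have h2 : ⟪y, (⟨ξ, hξ⟩ : Q)⟫_ℝ = F ξ := by
    rw [hy, InnerProductSpace.toDual_symm_apply]; rfl
  rw [hB₂app] at h1
  simp only [← h1, h2]

/-- Equivalence of the constrained eigenproblem and its mixed formulation
(the equivalence of (3.5) and (5.1), and of (4.1)–(4.2) with (4.23)–(4.24)).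
Here `W = {u ∈ V : a(u, ξ) = 0 ∀ ξ ∈ Q}` is the `a`-orthogonal complement of `Q`. -/
theorem constrained_eigenproblem_mixed_equiv
    {V : Type*} [NormedAddCommGroup V] [InnerProductSpace ℝ V] [CompleteSpace V]
    (a b : V →ₗ[ℝ] V →ₗ[ℝ] ℝ) (M α Mb : ℝ) (hM : 0 < M) (hα : 0 < α) (hMb : 0 < Mb)
    (hsymm : ∀ u v, a u v = a v u)
    (hbound : ∀ u v, |a u v| ≤ M * ‖u‖ * ‖v‖)
    (hcoer : ∀ v, α * ‖v‖ ^ 2 ≤ a v v)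
    (hbsymm : ∀ u v, b u v = b v u)
    (hbbound : ∀ u v, |b u v| ≤ Mb * ‖u‖ * ‖v‖)
    (Q : Submodule ℝ V) (hQ : IsClosed (Q : Set V))
    (lam : ℝ) (φ : V) (hφ : ∀ ξ ∈ Q, a φ ξ = 0) :
    ((∀ v : V, (∀ ξ ∈ Q, a v ξ = 0) → a φ v = lam * b φ v) ↔
      (∃! p : V, p ∈ Q ∧ ∀ v : V, a φ v + a v p = lam * b φ v)) ∧
    (∀ φ' p' : V, p' ∈ Q → (∀ v : V, a φ' v + a v p' = lam * b φ' v) →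
      (∀ ξ ∈ Q, a φ' ξ = 0) →
      ∀ v : V, (∀ ξ ∈ Q, a v ξ = 0) → a φ' v = lam * b φ' v) := by
  obtain ⟨B, hBapp⟩ : ∃ B : V →L[ℝ] V →L[ℝ] ℝ, ∀ u v, B u v = a u v :=
    ⟨LinearMap.mkContinuous₂ a M
      (fun u v => by rw [Real.norm_eq_abs]; exact hbound u v), fun u v => rfl⟩
  have hcoer' : ∀ v, α * ‖v‖ * ‖v‖ ≤ B v v := fun v => by
    rw [hBapp]; nlinarith [hcoer v]
  have huniq : ∀ p₁ p₂ : V, (∀ v : V, a φ v + a v p₁ = lam * b φ v) →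
      (∀ v : V, a φ v + a v p₂ = lam * b φ v) → p₁ = p₂ := by
    intro p₁ p₂ h1 h2
    have h3 : a (p₁ - p₂) (p₁ - p₂) = 0 := by
      have ha := h1 (p₁ - p₂); have hb := h2 (p₁ - p₂)
      have : a (p₁ - p₂) p₁ - a (p₁ - p₂) p₂ = 0 := by linarith
      simpa [map_sub] using this
    have h4 := hcoer (p₁ - p₂)
    rw [h3] at h4
    have h5 : ‖p₁ - p₂‖ = 0 := by
      by_contra h
      have hpos : 0 < ‖p₁ - p₂‖ := lt_of_le_of_ne (norm_nonneg _) (Ne.symm h)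
      nlinarith [mul_pos hα (pow_pos hpos 2)]
    exact sub_eq_zero.mp (norm_eq_zero.mp h5)
  -- existence and the w-decomposition, shared
  have hdecomp : ∀ v : V, ∃ ξ₀ ∈ Q, ∀ ξ ∈ Q, a (v - ξ₀) ξ = 0 := by
    intro v
    obtain ⟨ξ₀, hξ₀Q, hξ₀⟩ := helper_exists_lax B α hα hcoer' Q hQ (B v)
    refine ⟨ξ₀, hξ₀Q, fun ξ hξ => ?_⟩
    have h5 : a ξ ξ₀ = a v ξ := by rw [← hBapp, hξ₀ ξ hξ, hBapp]
    have h6 : a (v - ξ₀) ξ = a v ξ - a ξ₀ ξ := by simp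
    rw [h6, ← hsymm ξ ξ₀, h5]; ring
  constructor
  · constructor
    · intro hW
      obtain ⟨F, hFapp⟩ : ∃ F : V →L[ℝ] ℝ, ∀ v, F v = lam * b φ v - a φ v :=
        ⟨LinearMap.mkContinuous (lam • (b φ) - (a φ)) (|lam| * Mb * ‖φ‖ + M * ‖φ‖) (by
          intro v
          have hFv : (lam • (b φ) - (a φ)) v = lam * b φ v - a φ v := rfl
          rw [Real.norm_eq_abs, hFv]
          have h1 : |lam * b φ v - a φ v| ≤ |lam| * |b φ v| + |a φ v| := by
            calc |lam * b φ v - a φ v| ≤ |lam * b φ v| + |a φ v| := abs_sub _ _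
              _ = |lam| * |b φ v| + |a φ v| := by rw [abs_mul]
          have h2 := hbbound φ v
          have h3 := hbound φ v
          have h4 : |lam| * |b φ v| ≤ |lam| * (Mb * ‖φ‖ * ‖v‖) :=
            mul_le_mul_of_nonneg_left h2 (abs_nonneg _)
          nlinarith), fun v => rfl⟩
      obtain ⟨p, hpQ, hp⟩ := helper_exists_lax B α hα hcoer' Q hQ F
      have hp' : ∀ ξ ∈ Q, a ξ p = lam * b φ ξ - a φ ξ := fun ξ hξ => by
        rw [← hBapp, hp ξ hξ, hFapp]
      have hmain : ∀ v : V, a φ v + a v p = lam * b φ v := by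
        intro v
        obtain ⟨ξ₀, hξ₀Q, hwW⟩ := hdecomp v
        have hφw := hW (v - ξ₀) hwW
        have hawp := hwW p hpQ
        have haφξ := hφ ξ₀ hξ₀Q
        have hξ₀p := hp' ξ₀ hξ₀Q
        have e1 : a φ (v - ξ₀) = a φ v - a φ ξ₀ := by simp
        have e2 : b φ (v - ξ₀) = b φ v - b φ ξ₀ := by simp
        have e3 : a (v - ξ₀) p = a v p - a ξ₀ p := by simp
        rw [e1, e2, mul_sub] at hφw
        rw [e3] at hawp
        linarith
      exact ⟨p, ⟨hpQ, hmain⟩, fun p₂ h₂ => huniq p₂ p h₂.2 hmain⟩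
    · rintro ⟨p, ⟨hpQ, hp⟩, -⟩ v hvW
      have h0 : a v p = 0 := hvW p hpQ
      have := hp v
      linarith
  · intro φ' p' hp'Q hp' hφ' v hvW
    have h0 : a v p' = 0 := hvW p' hp'Q
    have := hp' v
    linarith
end

section
/- Invertibility of the bordered matrix in the Neumann case (the claim that the matrix Â in (5.12) is symmetric and invertible): let A be a real symmetric positive semidefinite n × n matrix whose kernel is exactly the span of a nonzero vector e ∈ ℝⁿ, and let m ∈ ℝⁿ satisfy ⟨m, e⟩ ≠ 0. Then the (n+1) × (n+1) block matrix Â = [[A, m], [mᵀ, 0]] (with m as an extra column, mᵀ as an extra row and 0 in the corner) is symmetric and invertible. -/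
/-!
Write `Â v = 0` with `v = (x, t)`, i.e. `A x + t m = 0` and `⟨m, x⟩ = 0`. Pairing the first
equation with `x` gives `xᵀ A x = -t ⟨m, x⟩ = 0`, so `A x = 0` by positive semidefiniteness.
Then `t m = 0` forces `t = 0`, and `x = s e` with `s ⟨m, e⟩ = ⟨m, x⟩ = 0` forces `x = 0`.
The same argument shows that every saddle-point matrix `[[A, B], [Bᴴ, 0]]` with `A ⪰ 0`,
`B` injective and `ker A ∩ ker Bᴴ = 0` is invertible.
-/

open Matrix

open scoped ComplexOrder

namespace Matrix

section SaddlePoint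

variable {𝕜 n p : Type*} [RCLike 𝕜] [Fintype n] [Fintype p]

theorem PosSemidef.mulVec_eq_zero_of_add_mulVec_eq_zero {A : Matrix n n 𝕜} {B : Matrix n p 𝕜}
    (hA : A.PosSemidef) {x : n → 𝕜} {y : p → 𝕜} (hxy : A *ᵥ x + B *ᵥ y = 0)
    (hx : Bᴴ *ᵥ x = 0) : A *ᵥ x = 0 := by
  have hBy : star x ⬝ᵥ B *ᵥ y = 0 := by
    rw [dotProduct_mulVec, ← conjTranspose_conjTranspose B, ← star_mulVec, hx, star_zero,
      zero_dotProduct]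
  rw [← hA.dotProduct_mulVec_zero_iff, eq_neg_of_add_eq_zero_left hxy, dotProduct_neg, hBy,
    neg_zero]

theorem isUnit_fromBlocks_conjTranspose_zero [DecidableEq n] [DecidableEq p]
    {A : Matrix n n 𝕜} {B : Matrix n p 𝕜} (hA : A.PosSemidef) (hB : Function.Injective B.mulVec)
    (hAB : ∀ x, A *ᵥ x = 0 → Bᴴ *ᵥ x = 0 → x = 0) :
    IsUnit (fromBlocks A B Bᴴ 0) := by
  rw [← mulVec_injective_iff_isUnit, ← coe_mulVecLin, ← LinearMap.ker_eq_bot]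
  refine ker_mulVecLin_eq_bot_iff.2 fun v hv ↦ ?_
  rw [fromBlocks_mulVec, zero_mulVec, add_zero, ← Sum.elim_zero_zero, Sum.elim_eq_iff] at hv
  obtain ⟨hxy, hx⟩ := hv
  have hAx := hA.mulVec_eq_zero_of_add_mulVec_eq_zero hxy hx
  have hy : v ∘ Sum.inr = 0 := hB <| by rwa [hAx, zero_add, ← mulVec_zero B] at hxy
  rw [← Sum.elim_comp_inl_inr v, hAB _ hAx hx, hy, Sum.elim_zero_zero]

end SaddlePoint

theorem mulVec_replicateCol_injective {K n p : Type*} [Field K] [Fintype p] [Unique p]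
    {m : n → K} (hm : m ≠ 0) : Function.Injective (replicateCol p m).mulVec :=
  mulVec_injective_iff.2 (linearIndependent_unique_iff.2 hm)

end Matrix

theorem bordered_matrix_symm_invertible_general
    (n : ℕ) (A : Matrix (Fin n) (Fin n) ℝ) (e m : Fin n → ℝ)
    (hsym : Aᵀ = A)
    (hpsd : ∀ x : Fin n → ℝ, 0 ≤ x ⬝ᵥ A.mulVec x)
    (hker : {x : Fin n → ℝ | A.mulVec x = 0} = {x : Fin n → ℝ | ∃ t : ℝ, x = t • e})
    (hm : m ⬝ᵥ e ≠ 0) :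
    (Matrix.fromBlocks A (Matrix.of fun i (_ : Fin 1) => m i)
        (Matrix.of fun (_ : Fin 1) j => m j) (0 : Matrix (Fin 1) (Fin 1) ℝ))ᵀ =
      Matrix.fromBlocks A (Matrix.of fun i (_ : Fin 1) => m i)
        (Matrix.of fun (_ : Fin 1) j => m j) (0 : Matrix (Fin 1) (Fin 1) ℝ) ∧
    IsUnit (Matrix.fromBlocks A (Matrix.of fun i (_ : Fin 1) => m i)
        (Matrix.of fun (_ : Fin 1) j => m j) (0 : Matrix (Fin 1) (Fin 1) ℝ)) := by
  have hB : (replicateCol (Fin 1) m)ᴴ = replicateRow (Fin 1) m := by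
    rw [conjTranspose_eq_transpose_of_trivial, transpose_replicateCol]
  have hA : A.PosSemidef := posSemidef_iff_dotProduct_mulVec.2
    ⟨by rw [IsHermitian, conjTranspose_eq_transpose_of_trivial, hsym],
      fun x ↦ by simpa using hpsd x⟩
  have hm0 : m ≠ 0 := by
    rintro rfl
    exact hm (zero_dotProduct e)
  have hAm : ∀ x, A *ᵥ x = 0 → (replicateCol (Fin 1) m)ᴴ *ᵥ x = 0 → x = 0 := by
    intro x hAx hmx
    obtain ⟨s, rfl⟩ := (Set.ext_iff.1 hker x).1 hAx
    have hs : s * (m ⬝ᵥ e) = 0 := by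
      simpa [hB, replicateRow_mulVec_eq_const, dotProduct_smul] using hmx
    rw [(mul_eq_zero.1 hs).resolve_right hm, zero_smul]
  refine ⟨IsSymm.fromBlocks hsym (transpose_replicateCol m) isSymm_zero, ?_⟩
  have := isUnit_fromBlocks_conjTranspose_zero hA (mulVec_replicateCol_injective hm0) hAm
  rwa [hB] at this

/-- Invertibility of the bordered matrix in the Neumann case (the matrix `Â` in (5.12)):
if `A` is symmetric positive semidefinite with kernel exactly the span of `e ≠ 0`, and
`⟨m, e⟩ ≠ 0`, then the bordered matrix `Â = [[A, m], [mᵀ, 0]]` is symmetric and invertible. -/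
theorem bordered_matrix_symm_invertible
    (n : ℕ) (A : Matrix (Fin n) (Fin n) ℝ) (e m : Fin n → ℝ)
    (hsym : Aᵀ = A)
    (hpsd : ∀ x : Fin n → ℝ, 0 ≤ x ⬝ᵥ A.mulVec x)
    (he : e ≠ 0)
    (hker : {x : Fin n → ℝ | A.mulVec x = 0} = {x : Fin n → ℝ | ∃ t : ℝ, x = t • e})
    (hm : m ⬝ᵥ e ≠ 0) :
    (Matrix.fromBlocks A (Matrix.of fun i (_ : Fin 1) => m i)
        (Matrix.of fun (_ : Fin 1) j => m j) (0 : Matrix (Fin 1) (Fin 1) ℝ))ᵀ =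
      Matrix.fromBlocks A (Matrix.of fun i (_ : Fin 1) => m i)
        (Matrix.of fun (_ : Fin 1) j => m j) (0 : Matrix (Fin 1) (Fin 1) ℝ) ∧
    IsUnit (Matrix.fromBlocks A (Matrix.of fun i (_ : Fin 1) => m i)
        (Matrix.of fun (_ : Fin 1) j => m j) (0 : Matrix (Fin 1) (Fin 1) ℝ)) :=
  bordered_matrix_symm_invertible_general n A e m hsym hpsd hker hm
end

section
/- Caccioppoli-type identity for A-harmonic functions (Lemma 3.11, with the A-harmonicity hypothesis stated as orthogonality against the test functions η²v and η²u): if ∫_Ω ⟨A(x) ∇u(x), ∇(η²·v)(x)⟩ dx = 0 and ∫_Ω ⟨A(x) ∇v(x), ∇(η²·u)(x)⟩ dx = 0, then ∫_Ω ⟨A(x) ∇(η·u)(x), ∇(η·v)(x)⟩ dx = ∫_Ω ⟨A(x) ∇η(x), ∇η(x)⟩ · u(x) · v(x) dx. -/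
open MeasureTheory
open scoped RealInnerProductSpace

/-!
Expanding `∇(ηu) = η∇u + u∇η` and `∇(η²v) = η²∇v + 2ηv∇η` and using the symmetry of `A(x)`
gives the pointwise identity
`⟨A∇(ηu), ∇(ηv)⟩ = ⟨A∇η, ∇η⟩uv + ½⟨A∇u, ∇(η²v)⟩ + ½⟨A∇v, ∇(η²u)⟩`;
integrating it over `Ω`, the last two terms vanish by the orthogonality hypotheses.
-/

section Gradient

variable {E : Type*} [NormedAddCommGroup E] [InnerProductSpace ℝ E] [CompleteSpace E]
  {f g : E → ℝ} {x : E}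

theorem gradient_fun_mul (hf : DifferentiableAt ℝ f x) (hg : DifferentiableAt ℝ g x) :
    gradient (fun y => f y * g y) x = f x • gradient g x + g x • gradient f x := by
  rw [gradient, fderiv_fun_mul hf hg, map_add, map_smul, map_smul, gradient, gradient]

theorem gradient_fun_sq_mul (hf : DifferentiableAt ℝ f x) (hg : DifferentiableAt ℝ g x) :
    gradient (fun y => f y ^ 2 * g y) x =
      f x ^ 2 • gradient g x + (2 * f x * g x) • gradient f x := by
  have hf2 : DifferentiableAt ℝ (fun y => f y ^ 2) x := hf.pow 2
  have hgrad_sq : gradient (fun y => f y ^ 2) x = (2 * f x) • gradient f x := by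
    simp_rw [sq]
    rw [gradient_fun_mul hf hf]
    module
  rw [gradient_fun_mul hf2 hg, hgrad_sq]
  module

theorem inner_gradient_mul_gradient_mul_eq {T : E →L[ℝ] E} (hT : (T : E →ₗ[ℝ] E).IsSymmetric)
    {u v η : E → ℝ} (hu : DifferentiableAt ℝ u x) (hv : DifferentiableAt ℝ v x)
    (hη : DifferentiableAt ℝ η x) :
    ⟪T (gradient (fun y => η y * u y) x), gradient (fun y => η y * v y) x⟫ =
      ⟪T (gradient η x), gradient η x⟫ * u x * v x
        + 2⁻¹ * ⟪T (gradient u x), gradient (fun y => η y ^ 2 * v y) x⟫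
        + 2⁻¹ * ⟪T (gradient v x), gradient (fun y => η y ^ 2 * u y) x⟫ := by
  have hT_swap : ∀ ξ ζ, ⟪T ξ, ζ⟫ = ⟪T ζ, ξ⟫ := fun ξ ζ => by
    rw [real_inner_comm]; exact (hT ζ ξ).symm
  rw [gradient_fun_mul hη hu, gradient_fun_mul hη hv, gradient_fun_sq_mul hη hu,
    gradient_fun_sq_mul hη hv]
  simp only [map_add, map_smul, inner_add_left, inner_add_right, real_inner_smul_left,
    real_inner_smul_right]
  rw [hT_swap (gradient v x) (gradient u x), hT_swap (gradient v x) (gradient η x)]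
  ring

end Gradient

theorem caccioppoli_identity_general
    (d : ℕ) (Ω : Set (EuclideanSpace ℝ (Fin d))) (hΩ : IsOpen Ω)
    (A : EuclideanSpace ℝ (Fin d) → (EuclideanSpace ℝ (Fin d) →L[ℝ] EuclideanSpace ℝ (Fin d)))
    (hA : ∀ᵐ x ∂(volume.restrict Ω), ∀ ξ ζ : EuclideanSpace ℝ (Fin d), ⟪A x ξ, ζ⟫ = ⟪ξ, A x ζ⟫)
    (u v η : EuclideanSpace ℝ (Fin d) → ℝ)
    (hu : ∀ x ∈ Ω, DifferentiableAt ℝ u x)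
    (hv : ∀ x ∈ Ω, DifferentiableAt ℝ v x)
    (hη : ∀ x ∈ Ω, DifferentiableAt ℝ η x)
    (hint2 : IntegrableOn (fun x =>
      ⟪A x (gradient η x), gradient η x⟫ * u x * v x) Ω)
    (hint3 : IntegrableOn (fun x =>
      ⟪A x (gradient u x), gradient (fun y => (η y) ^ 2 * v y) x⟫) Ω)
    (hint4 : IntegrableOn (fun x =>
      ⟪A x (gradient v x), gradient (fun y => (η y) ^ 2 * u y) x⟫) Ω)
    (horth1 : ∫ x in Ω, ⟪A x (gradient u x), gradient (fun y => (η y) ^ 2 * v y) x⟫ = 0)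
    (horth2 : ∫ x in Ω, ⟪A x (gradient v x), gradient (fun y => (η y) ^ 2 * u y) x⟫ = 0) :
    ∫ x in Ω, ⟪A x (gradient (fun y => η y * u y) x), gradient (fun y => η y * v y) x⟫ =
      ∫ x in Ω, ⟪A x (gradient η x), gradient η x⟫ * u x * v x := by
  have pointwise : ∀ᵐ x ∂(volume.restrict Ω),
      ⟪A x (gradient (fun y => η y * u y) x), gradient (fun y => η y * v y) x⟫ =
        ⟪A x (gradient η x), gradient η x⟫ * u x * v x
          + 2⁻¹ * ⟪A x (gradient u x), gradient (fun y => η y ^ 2 * v y) x⟫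
          + 2⁻¹ * ⟪A x (gradient v x), gradient (fun y => η y ^ 2 * u y) x⟫ := by
    filter_upwards [hA, ae_restrict_mem hΩ.measurableSet] with x hAx hx
    exact inner_gradient_mul_gradient_mul_eq hAx (hu x hx) (hv x hx) (hη x hx)
  rw [integral_congr_ae pointwise,
    integral_add (Integrable.fun_add hint2 (hint3.const_mul _)) (hint4.const_mul _),
    integral_add hint2 (hint3.const_mul _), integral_const_mul, integral_const_mul, horth1, horth2]
  ring

/-- Caccioppoli-type identity for `A`-harmonic functions (Lemma 3.11, with the
`A`-harmonicity hypothesis stated as orthogonality against the test functions `η²v`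
and `η²u`): `∫_Ω ⟨A ∇(ηu), ∇(ηv)⟩ = ∫_Ω ⟨A ∇η, ∇η⟩ u v`. -/
theorem caccioppoli_identity
    (d : ℕ) (Ω : Set (EuclideanSpace ℝ (Fin d))) (hΩ : IsOpen Ω)
    (A : EuclideanSpace ℝ (Fin d) → (EuclideanSpace ℝ (Fin d) →L[ℝ] EuclideanSpace ℝ (Fin d)))
    (hA : ∀ᵐ x ∂(volume.restrict Ω), ∀ ξ ζ : EuclideanSpace ℝ (Fin d), ⟪A x ξ, ζ⟫ = ⟪ξ, A x ζ⟫)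
    (u v η : EuclideanSpace ℝ (Fin d) → ℝ)
    (hu : ∀ x ∈ Ω, DifferentiableAt ℝ u x)
    (hv : ∀ x ∈ Ω, DifferentiableAt ℝ v x)
    (hη : ∀ x ∈ Ω, DifferentiableAt ℝ η x)
    (hint1 : IntegrableOn (fun x =>
      ⟪A x (gradient (fun y => η y * u y) x), gradient (fun y => η y * v y) x⟫) Ω)
    (hint2 : IntegrableOn (fun x =>
      ⟪A x (gradient η x), gradient η x⟫ * u x * v x) Ω)
    (hint3 : IntegrableOn (fun x =>
      ⟪A x (gradient u x), gradient (fun y => (η y) ^ 2 * v y) x⟫) Ω)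
    (hint4 : IntegrableOn (fun x =>
      ⟪A x (gradient v x), gradient (fun y => (η y) ^ 2 * u y) x⟫) Ω)
    (horth1 : ∫ x in Ω, ⟪A x (gradient u x), gradient (fun y => (η y) ^ 2 * v y) x⟫ = 0)
    (horth2 : ∫ x in Ω, ⟪A x (gradient v x), gradient (fun y => (η y) ^ 2 * u y) x⟫ = 0) :
    ∫ x in Ω, ⟪A x (gradient (fun y => η y * u y) x), gradient (fun y => η y * v y) x⟫ =
      ∫ x in Ω, ⟪A x (gradient η x), gradient η x⟫ * u x * v x :=
  caccioppoli_identity_general d Ω hΩ A hA u v η hu hv hη hint2 hint3 hint4 horth1 horth2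
end
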